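/- arXiv:1903.06558 — 2 statements merged into one kernel-verified Lean document; each statement's English description precedes it below -/
import Mathlib

section
/- For real x with 0 < x ≤ 1, the function f(y) = (1/2)log(1-y²) + y - log(1+y) evaluated at y = √(1-x²) satisfies f(√(1-x²)) ≤ -(1/3)(1-x²)^{3/2}. Equivalently, log x + √(1-x²) - log(1+√(1-x²)) ≤ -(1/3)(1-x²)^{3/2}. -/
/-!
Put `y = √(1 - x²) ∈ [0, 1)`, so that `log x = ½ log(1 - y²)` and `(1 - x²)^{3/2} = y³`.
The inequality becomes `½ log(1 - y²) + y - log(1 + y) ≤ -y³/3`, i.e.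
`2y + 2y³/3 ≤ log(1 + y) - log(1 - y)`, and the left side is the sum of the first two terms
of the series `log(1 + y) - log(1 - y) = ∑ 2 y^{2k+1} / (2k + 1)`, all of whose terms are `≥ 0`.
-/

open Real

lemma two_mul_add_le_log_one_add_sub_log_one_sub {y : ℝ} (hy0 : 0 ≤ y) (hy1 : y < 1) :
    2 * y + 2 / 3 * y ^ 3 ≤ log (1 + y) - log (1 - y) := by
  have hsum := hasSum_log_sub_log_of_abs_lt_one (abs_lt.2 ⟨by linarith, hy1⟩)
  have := sum_le_hasSum (Finset.range 2) (fun k _ => by positivity) hsum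
  norm_num [Finset.sum_range_succ] at this
  linarith

lemma half_log_one_sub_sq_add_sub_log_one_add_le {y : ℝ} (hy0 : 0 ≤ y) (hy1 : y < 1) :
    1 / 2 * log (1 - y ^ 2) + y - log (1 + y) ≤ -(1 / 3) * y ^ 3 := by
  have hfactor : log (1 - y ^ 2) = log (1 - y) + log (1 + y) := by
    rw [← log_mul (by linarith) (by linarith)]
    ring_nf
  have := two_mul_add_le_log_one_add_sub_log_one_sub hy0 hy1
  linarith

theorem stmt_8 (x : ℝ) (hx0 : 0 < x) (hx1 : x ≤ 1) :
    Real.log x + Real.sqrt (1 - x ^ 2) - Real.log (1 + Real.sqrt (1 - x ^ 2)) ≤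
      -(1 / 3) * (1 - x ^ 2) ^ ((3 : ℝ) / 2) := by
  have hx2 : 0 ≤ 1 - x ^ 2 := by nlinarith
  set y := √(1 - x ^ 2) with hy
  have hy1 : y < 1 := (sqrt_lt' one_pos).2 (by nlinarith)
  have hlog : log x = 1 / 2 * log (1 - y ^ 2) := by
    rw [hy, sq_sqrt hx2, sub_sub_cancel, log_pow]
    push_cast
    ring
  have hpow : (1 - x ^ 2) ^ ((3 : ℝ) / 2) = y ^ 3 := by
    rw [rpow_div_two_eq_sqrt _ hx2, ← hy]
    norm_cast
  rw [hlog, hpow]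
  exact half_log_one_sub_sq_add_sub_log_one_add_le (sqrt_nonneg _) hy1
end

section
/- For the Bessel function J_m with m ≥ 0 and 0 < x ≤ 1, the bound log|J_m(mx)| ≤ m(log x + √(1-x²) - log(1+√(1-x²))) implies |J_m(mx)| ≤ exp(-(m/3)(1-x²)^{3/2}). -/
/-- The Bessel function of the first kind of (real) order `m`, defined by its
power series `J_m(u) = ∑_{k≥0} (-1)^k / (k! Γ(m+k+1)) (u/2)^{2k+m}`,
using real powers of `u/2`. -/
noncomputable def besselJ (m u : ℝ) : ℝ :=
  ∑' k : ℕ, ((-1) ^ k / (Nat.factorial k * Real.Gamma (m + k + 1))) *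
    (u / 2) ^ (2 * k + m : ℝ)

/-!
With `s = √(1 - x²)` one has `log x = (log (1 - s) + log (1 + s)) / 2`, so the exponent
`log x + s - log (1 + s)` equals `s - artanh s`. For `0 ≤ s < 1` the series
`artanh s = ∑ s^(2k+1) / (2k+1)` has nonnegative terms, hence `artanh s ≥ s + s³/3`,
and the exponent is at most `-s³/3 = -(1 - x²)^(3/2) / 3`.
-/

open Real

lemma two_mul_add_le_log_sub_log {s : ℝ} (hs0 : 0 ≤ s) (hs1 : s < 1) :
    2 * s + 2 / 3 * s ^ 3 ≤ log (1 + s) - log (1 - s) := by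
  have hsum := hasSum_log_sub_log_of_abs_lt_one (abs_lt.2 ⟨by linarith, hs1⟩)
  have hpartial := sum_le_hasSum (Finset.range 2) (fun k _ => by positivity) hsum
  norm_num [Finset.sum_range_succ] at hpartial
  linarith

lemma log_add_sqrt_one_sub_sq_sub_log_le {x : ℝ} (hx0 : 0 < x) (hx1 : x ≤ 1) :
    log x + √(1 - x ^ 2) - log (1 + √(1 - x ^ 2)) ≤ -(1 / 3) * (1 - x ^ 2) ^ ((3 : ℝ) / 2) := by
  have h1x : 0 ≤ 1 - x ^ 2 := by nlinarith
  set s := √(1 - x ^ 2)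
  have hs0 : 0 ≤ s := sqrt_nonneg _
  have hs2 : s ^ 2 = 1 - x ^ 2 := sq_sqrt h1x
  have hs1 : s < 1 := by nlinarith
  have hlog_x : 2 * log x = log (1 - s) + log (1 + s) := by
    rw [← log_mul (by linarith) (by linarith), show (1 - s) * (1 + s) = x ^ 2 by nlinarith,
      log_pow]
    norm_num
  have hpow : (1 - x ^ 2) ^ ((3 : ℝ) / 2) = s ^ 3 := by
    rw [rpow_div_two_eq_sqrt _ h1x]
    exact_mod_cast rpow_natCast s 3
  rw [hpow]
  linarith [two_mul_add_le_log_sub_log hs0 hs1]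

theorem stmt_19 (m : ℝ) (hm : 0 ≤ m) (x : ℝ) (hx0 : 0 < x) (hx1 : x ≤ 1)
    (h : Real.log |besselJ m (m * x)| ≤
        m * (Real.log x + Real.sqrt (1 - x ^ 2) -
          Real.log (1 + Real.sqrt (1 - x ^ 2)))) :
    |besselJ m (m * x)| ≤ Real.exp (-(m / 3) * (1 - x ^ 2) ^ ((3 : ℝ) / 2)) := by
  have hexponent : m * (log x + √(1 - x ^ 2) - log (1 + √(1 - x ^ 2))) ≤
      -(m / 3) * (1 - x ^ 2) ^ ((3 : ℝ) / 2) := by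
    have := mul_le_mul_of_nonneg_left (log_add_sqrt_one_sub_sq_sub_log_le hx0 hx1) hm
    linarith
  rcases (abs_nonneg (besselJ m (m * x))).eq_or_lt with hJ | hJ
  · rw [← hJ]
    exact (exp_pos _).le
  · exact (log_le_iff_le_exp hJ).1 (h.trans hexponent)
end
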